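/- arXiv:physics/0411233 — 7 statements merged into one kernel-verified Lean document; each statement's English description precedes it below -/
import Mathlib

section
/- Let a : ℝ → ℝ be continuous, θ₀ ∈ ℝ, Θ(τ) = ∫₀^τ a(s) ds, and let the worldline be x⁰(τ) = ∫₀^τ cosh(Θ(t)+θ₀) dt, x¹(τ) = ∫₀^τ sinh(Θ(t)+θ₀) dt. If τ̄ > 0 and the trip is a round trip, i.e. x¹(τ̄) = x¹(0) = 0, then the inertial duration T = x⁰(τ̄) − x⁰(0) satisfies T² = (∫₀^{τ̄} e^{Θ(τ)} dτ) · (∫₀^{τ̄} e^{−Θ(τ)} dτ). In particular T² does not depend on the initial rapidity θ₀. -/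
open Real intervalIntegral

/-- Time dilation–acceleration equation (Theorem 1): for a round trip
(`x1 τf = x1 0 = 0`) the inertial duration `T = x0 τf - x0 0` satisfies
`T² = (∫₀^τf e^Θ)(∫₀^τf e^{-Θ})`, independently of the initial rapidity `θ₀`. -/
theorem time_dilation_acceleration (a : ℝ → ℝ) (ha : Continuous a) (θ₀ : ℝ)
    (Θ x0 x1 : ℝ → ℝ)
    (hΘ : ∀ τ, Θ τ = ∫ s in (0:ℝ)..τ, a s)
    (hx0 : ∀ τ, x0 τ = ∫ t in (0:ℝ)..τ, Real.cosh (Θ t + θ₀))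
    (hx1 : ∀ τ, x1 τ = ∫ t in (0:ℝ)..τ, Real.sinh (Θ t + θ₀))
    (τf : ℝ) (hτf : 0 < τf)
    (hround : x1 τf = x1 0)
    (T : ℝ) (hT : T = x0 τf - x0 0) :
    T ^ 2 = (∫ τ in (0:ℝ)..τf, Real.exp (Θ τ)) * (∫ τ in (0:ℝ)..τf, Real.exp (-Θ τ)) := by
  have hΘc : Continuous Θ := by
    have : Θ = fun τ => ∫ s in (0:ℝ)..τ, a s := funext hΘ
    rw [this]
    exact intervalIntegral.continuous_primitive (fun a b => ha.intervalIntegrable a b) 0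
  have hIp : IntervalIntegrable (fun τ => Real.exp (Θ τ + θ₀)) MeasureTheory.volume 0 τf :=
    ((Real.continuous_exp.comp (hΘc.add continuous_const))).intervalIntegrable 0 τf
  have hIm : IntervalIntegrable (fun τ => Real.exp (-(Θ τ + θ₀))) MeasureTheory.volume 0 τf :=
    ((Real.continuous_exp.comp ((hΘc.add continuous_const).neg))).intervalIntegrable 0 τf
  set A := ∫ τ in (0:ℝ)..τf, Real.exp (Θ τ + θ₀) with hA
  set B := ∫ τ in (0:ℝ)..τf, Real.exp (-(Θ τ + θ₀)) with hB
  have hx10 : x1 0 = 0 := by rw [hx1]; simp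
  have hsinh : (∫ t in (0:ℝ)..τf, Real.sinh (Θ t + θ₀)) = (A - B) / 2 := by
    rw [hA, hB, ← intervalIntegral.integral_sub hIp hIm, ← intervalIntegral.integral_div]
    congr 1; funext t; rw [Real.sinh_eq]
  have hcosh : (∫ t in (0:ℝ)..τf, Real.cosh (Θ t + θ₀)) = (A + B) / 2 := by
    rw [hA, hB, ← intervalIntegral.integral_add hIp hIm, ← intervalIntegral.integral_div]
    congr 1; funext t; rw [Real.cosh_eq]
  have hround' : A = B := by
    have := hround
    rw [hx10, hx1, hsinh] at this
    linarith
  have hx00 : x0 0 = 0 := by rw [hx0]; simp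
  have hT' : T = (A + B) / 2 := by rw [hT, hx00, hx0, hcosh]; ring
  have hAe : A = Real.exp θ₀ * ∫ τ in (0:ℝ)..τf, Real.exp (Θ τ) := by
    rw [hA, ← intervalIntegral.integral_const_mul]
    congr 1; funext t; rw [← Real.exp_add]; ring_nf
  have hBe : B = Real.exp (-θ₀) * ∫ τ in (0:ℝ)..τf, Real.exp (-Θ τ) := by
    rw [hB, ← intervalIntegral.integral_const_mul]
    congr 1; funext t; rw [← Real.exp_add]; ring_nf
  have : T ^ 2 = A * B := by rw [hT', hround']; ring
  rw [this, hAe, hBe]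
  rw [show Real.exp θ₀ * _ * (Real.exp (-θ₀) * _) =
    (Real.exp θ₀ * Real.exp (-θ₀)) * ((∫ τ in (0:ℝ)..τf, Real.exp (Θ τ)) * (∫ τ in (0:ℝ)..τf, Real.exp (-Θ τ))) from by ring,
    ← Real.exp_add, add_neg_cancel, Real.exp_zero, one_mul]
end

section
/- Let a : ℝ → ℝ be continuous, θ₀ ∈ ℝ, Θ(τ) = ∫₀^τ a(s) ds, τ̄ > 0, and suppose the round-trip condition ∫₀^{τ̄} sinh(Θ(τ) + θ₀) dτ = 0 holds. Then θ₀ = 0 if and only if ∫₀^{τ̄} e^{Θ(τ)} dτ = ∫₀^{τ̄} e^{−Θ(τ)} dτ. -/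
open Real intervalIntegral

/-- First part of Theorem 2: under the round-trip condition, the observer
departs with zero velocity (`θ₀ = 0`) iff the two exponential integrals coincide. -/
theorem zero_initial_velocity_iff (a : ℝ → ℝ) (ha : Continuous a) (θ₀ : ℝ) (Θ : ℝ → ℝ)
    (hΘ : ∀ τ, Θ τ = ∫ u in (0:ℝ)..τ, a u) (τf : ℝ) (hτf : 0 < τf)
    (hround : (∫ τ in (0:ℝ)..τf, Real.sinh (Θ τ + θ₀)) = 0) :
    θ₀ = 0 ↔ (∫ τ in (0:ℝ)..τf, Real.exp (Θ τ)) = ∫ τ in (0:ℝ)..τf, Real.exp (-Θ τ) := by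
  have hΘc : Continuous Θ := by
    have : Θ = fun τ => ∫ u in (0:ℝ)..τ, a u := funext hΘ
    rw [this]
    exact intervalIntegral.continuous_primitive (fun x y => ha.intervalIntegrable x y) 0
  set A := ∫ τ in (0:ℝ)..τf, Real.exp (Θ τ) with hA
  set B := ∫ τ in (0:ℝ)..τf, Real.exp (-Θ τ) with hB
  have hAint : IntervalIntegrable (fun τ => Real.exp (Θ τ)) MeasureTheory.volume 0 τf :=
    (Real.continuous_exp.comp hΘc).intervalIntegrable 0 τf
  have hBint : IntervalIntegrable (fun τ => Real.exp (-Θ τ)) MeasureTheory.volume 0 τf :=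
    (Real.continuous_exp.comp hΘc.neg).intervalIntegrable 0 τf
  have hApos : 0 < A := by
    exact intervalIntegral.intervalIntegral_pos_of_pos hAint (fun x => Real.exp_pos _) hτf
  have hBpos : 0 < B := by
    exact intervalIntegral.intervalIntegral_pos_of_pos hBint (fun x => Real.exp_pos _) hτf
  have key : Real.exp θ₀ * A = Real.exp (-θ₀) * B := by
    have hexp : (∫ τ in (0:ℝ)..τf, Real.sinh (Θ τ + θ₀))
        = (Real.exp θ₀ * A - Real.exp (-θ₀) * B) / 2 := by
      have h1 : ∀ τ : ℝ, Real.sinh (Θ τ + θ₀)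
          = (Real.exp θ₀ * Real.exp (Θ τ) - Real.exp (-θ₀) * Real.exp (-Θ τ)) / 2 := by
        intro τ
        rw [Real.sinh_eq]
        rw [← Real.exp_add, ← Real.exp_add]
        ring_nf
      simp only [h1]
      rw [intervalIntegral.integral_div]
      congr 1
      rw [intervalIntegral.integral_sub ((hAint.const_mul _)) ((hBint.const_mul _)),
        intervalIntegral.integral_const_mul, intervalIntegral.integral_const_mul]
    rw [hexp] at hround
    linarith
  constructor
  · intro h
    rw [h] at key
    simpa using key
  · intro h
    rw [h] at key
    have hexp : Real.exp θ₀ = Real.exp (-θ₀) :=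
      mul_right_cancel₀ (ne_of_gt hBpos) key
    have := Real.exp_injective hexp
    linarith
end

section
/- Let a : ℝ → ℝ be continuous, θ₀ ∈ ℝ, Θ(τ) = ∫₀^τ a(s) ds, and define x⁰(τ) = ∫₀^τ cosh(Θ(t)+θ₀) dt and x¹(τ) = ∫₀^τ sinh(Θ(t)+θ₀) dt. Then for every τ: (i) (x⁰′(τ))² − (x¹′(τ))² = 1 with x⁰′(τ) > 0 (the curve is unit-speed and future-directed), and (ii) without further hypotheses, (x⁰′)′ and (x¹′)′ exist and satisfy ((x⁰′)′(τ))² − ((x¹′)′(τ))² = −a(τ)². -/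
open Real intervalIntegral

/-- The reconstructed worldline `x0 = ∫ cosh(Θ+θ₀)`, `x1 = ∫ sinh(Θ+θ₀)` is a
future-directed unit-speed timelike curve whose four-acceleration has Minkowski
square `-a²`. -/
theorem reconstructed_worldline_properties (a : ℝ → ℝ) (ha : Continuous a) (θ₀ : ℝ)
    (Θ x0 x1 : ℝ → ℝ)
    (hΘ : ∀ τ, Θ τ = ∫ s in (0:ℝ)..τ, a s)
    (hx0 : ∀ τ, x0 τ = ∫ t in (0:ℝ)..τ, Real.cosh (Θ t + θ₀))
    (hx1 : ∀ τ, x1 τ = ∫ t in (0:ℝ)..τ, Real.sinh (Θ t + θ₀))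
    (τ : ℝ) :
    (deriv x0 τ) ^ 2 - (deriv x1 τ) ^ 2 = 1 ∧
    0 < deriv x0 τ ∧
    DifferentiableAt ℝ (deriv x0) τ ∧
    DifferentiableAt ℝ (deriv x1) τ ∧
    (deriv (deriv x0) τ) ^ 2 - (deriv (deriv x1) τ) ^ 2 = -(a τ) ^ 2 := by
  have hΘd : ∀ t, HasDerivAt Θ (a t) t := by
    intro t
    have := (ha.integral_hasStrictDerivAt 0 t).hasDerivAt
    exact this.congr_of_eventuallyEq (Filter.Eventually.of_forall fun u => hΘ u)
  have hΘc : Continuous Θ := by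
    have : Differentiable ℝ Θ := fun t => (hΘd t).differentiableAt
    exact this.continuous
  have hc0 : Continuous fun t => Real.cosh (Θ t + θ₀) :=
    Real.continuous_cosh.comp (hΘc.add continuous_const)
  have hc1 : Continuous fun t => Real.sinh (Θ t + θ₀) :=
    Real.continuous_sinh.comp (hΘc.add continuous_const)
  have hx0d : ∀ t, HasDerivAt x0 (Real.cosh (Θ t + θ₀)) t := by
    intro t
    have := (hc0.integral_hasStrictDerivAt 0 t).hasDerivAt
    exact this.congr_of_eventuallyEq (Filter.Eventually.of_forall fun u => hx0 u)
  have hx1d : ∀ t, HasDerivAt x1 (Real.sinh (Θ t + θ₀)) t := by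
    intro t
    have := (hc1.integral_hasStrictDerivAt 0 t).hasDerivAt
    exact this.congr_of_eventuallyEq (Filter.Eventually.of_forall fun u => hx1 u)
  have hdx0 : deriv x0 = fun t => Real.cosh (Θ t + θ₀) := funext fun t => (hx0d t).deriv
  have hdx1 : deriv x1 = fun t => Real.sinh (Θ t + θ₀) := funext fun t => (hx1d t).deriv
  have hΘθ : HasDerivAt (fun t => Θ t + θ₀) (a τ) τ := (hΘd τ).add_const θ₀
  have hd2x0 : HasDerivAt (deriv x0) (Real.sinh (Θ τ + θ₀) * a τ) τ := by
    rw [hdx0]; exact (Real.hasDerivAt_cosh _).comp τ hΘθ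
  have hd2x1 : HasDerivAt (deriv x1) (Real.cosh (Θ τ + θ₀) * a τ) τ := by
    rw [hdx1]; exact (Real.hasDerivAt_sinh _).comp τ hΘθ
  refine ⟨?_, ?_, hd2x0.differentiableAt, hd2x1.differentiableAt, ?_⟩
  · rw [hdx0, hdx1]
    exact Real.cosh_sq_sub_sinh_sq (Θ τ + θ₀)
  · rw [hdx0]; exact Real.cosh_pos _
  · rw [hd2x0.deriv, hd2x1.deriv]
    have h := Real.cosh_sq_sub_sinh_sq (Θ τ + θ₀)
    nlinarith [h]
end

section
/- Let a : ℝ → ℝ be continuous, Θ(τ) = ∫₀^τ a(s) ds, and T(τ) = √((∫₀^τ e^{Θ(t)} dt)(∫₀^τ e^{−Θ(t)} dt)). Then for every τ > 0, T is differentiable at τ and T′(τ) = cosh(A(τ)), where A(τ) = Θ(τ) + (1/2) ln((∫₀^τ e^{−Θ(t)} dt)/(∫₀^τ e^{Θ(t)} dt)). In particular T′(τ) ≥ 1 for all τ > 0. -/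
open Real intervalIntegral

/-- Derivative formula used in the proof of Theorem 3: `T'(τ) = cosh A(τ) ≥ 1`. -/
theorem deriv_inertial_time (a : ℝ → ℝ) (ha : Continuous a) (Θ T A : ℝ → ℝ)
    (hΘ : ∀ τ, Θ τ = ∫ u in (0:ℝ)..τ, a u)
    (hT : ∀ τ, T τ = Real.sqrt ((∫ t in (0:ℝ)..τ, Real.exp (Θ t)) *
      (∫ t in (0:ℝ)..τ, Real.exp (-Θ t))))
    (hA : ∀ τ, A τ = Θ τ + (1 / 2) * Real.log
      ((∫ t in (0:ℝ)..τ, Real.exp (-Θ t)) / (∫ t in (0:ℝ)..τ, Real.exp (Θ t))))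
    (τ : ℝ) (hτ : 0 < τ) :
    HasDerivAt T (Real.cosh (A τ)) τ ∧ 1 ≤ deriv T τ := by
  have hΘc : Continuous Θ := by
    have hfun : Θ = fun τ => ∫ u in (0:ℝ)..τ, a u := funext hΘ
    rw [hfun]
    exact continuous_iff_continuousAt.mpr fun x =>
      ((ha.integral_hasStrictDerivAt 0 x).hasDerivAt).continuousAt
  set f : ℝ → ℝ := fun t => Real.exp (Θ t) with hf
  set g : ℝ → ℝ := fun t => Real.exp (-Θ t) with hg
  have hfc : Continuous f := Real.continuous_exp.comp hΘc
  have hgc : Continuous g := Real.continuous_exp.comp hΘc.neg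
  set F : ℝ := ∫ t in (0:ℝ)..τ, f t with hFdef
  set G : ℝ := ∫ t in (0:ℝ)..τ, g t with hGdef
  have hFpos : 0 < F :=
    intervalIntegral_pos_of_pos (hfc.intervalIntegrable 0 τ) (fun x => Real.exp_pos _) hτ
  have hGpos : 0 < G :=
    intervalIntegral_pos_of_pos (hgc.intervalIntegrable 0 τ) (fun x => Real.exp_pos _) hτ
  have hFd : HasDerivAt (fun x => ∫ t in (0:ℝ)..x, f t) (f τ) τ :=
    (hfc.integral_hasStrictDerivAt 0 τ).hasDerivAt
  have hGd : HasDerivAt (fun x => ∫ t in (0:ℝ)..x, g t) (g τ) τ :=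
    (hgc.integral_hasStrictDerivAt 0 τ).hasDerivAt
  have hTfun : T = fun x => Real.sqrt ((∫ t in (0:ℝ)..x, f t) * (∫ t in (0:ℝ)..x, g t)) :=
    funext hT
  have hprod : HasDerivAt (fun x => (∫ t in (0:ℝ)..x, f t) * (∫ t in (0:ℝ)..x, g t))
      (f τ * G + F * g τ) τ := hFd.mul hGd
  have hmulpos : 0 < F * G := mul_pos hFpos hGpos
  have hTd : HasDerivAt T ((f τ * G + F * g τ) / (2 * Real.sqrt (F * G))) τ := by
    rw [hTfun]
    exact hprod.sqrt (ne_of_gt hmulpos)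
  have hsF : (0:ℝ) < Real.sqrt F := Real.sqrt_pos.mpr hFpos
  have hsG : (0:ℝ) < Real.sqrt G := Real.sqrt_pos.mpr hGpos
  have hGF : (0:ℝ) < G / F := div_pos hGpos hFpos
  have hhalf : Real.exp ((1/2) * Real.log (G / F)) = Real.sqrt G / Real.sqrt F := by
    rw [← Real.sqrt_div hGpos.le, Real.sqrt_eq_rpow, Real.rpow_def_of_pos hGF, mul_comm]
  have hexpA : Real.exp (A τ) = f τ * (Real.sqrt G / Real.sqrt F) := by
    rw [hA τ, Real.exp_add, hhalf]
  have hexpnA : Real.exp (-A τ) = g τ * (Real.sqrt F / Real.sqrt G) := by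
    rw [hA τ, neg_add, Real.exp_add, Real.exp_neg (1 / 2 * Real.log (G / F)), hhalf, inv_div]
  have hF2 : Real.sqrt F * Real.sqrt F = F := Real.mul_self_sqrt hFpos.le
  have hG2 : Real.sqrt G * Real.sqrt G = G := Real.mul_self_sqrt hGpos.le
  have hkey : (f τ * G + F * g τ) / (2 * Real.sqrt (F * G)) = Real.cosh (A τ) := by
    rw [Real.cosh_eq, hexpA, hexpnA, Real.sqrt_mul hFpos.le]
    field_simp
    linear_combination (-(f τ)) * hG2 +
      (-(g τ)) * hF2
  rw [hkey] at hTd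
  exact ⟨hTd, hTd.deriv ▸ Real.one_le_cosh (A τ)⟩
end

section
/- Let a : ℝ → ℝ be continuous, Θ(τ) = ∫₀^τ a(s) ds, T(τ) = √((∫₀^τ e^{Θ(t)} dt)(∫₀^τ e^{−Θ(t)} dt)), and Δ(τ) = T(τ) − τ. Then Δ is non-decreasing on [0, ∞). -/
open Real intervalIntegral

/-- Theorem 3: the differential aging `Δ(τ) = T(τ) - τ` is non-decreasing on `[0, ∞)`. -/
theorem differential_aging_monotone (a : ℝ → ℝ) (ha : Continuous a) (Θ T Δ : ℝ → ℝ)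
    (hΘ : ∀ τ, Θ τ = ∫ u in (0:ℝ)..τ, a u)
    (hT : ∀ τ, T τ = Real.sqrt ((∫ t in (0:ℝ)..τ, Real.exp (Θ t)) *
      (∫ t in (0:ℝ)..τ, Real.exp (-Θ t))))
    (hΔ : ∀ τ, Δ τ = T τ - τ) :
    MonotoneOn Δ (Set.Ici (0:ℝ)) := by
  have hΘc : Continuous Θ := by
    have : Continuous fun τ => ∫ u in (0:ℝ)..τ, a u :=
      intervalIntegral.continuous_primitive (fun a b => ha.intervalIntegrable a b) 0
    simpa [funext hΘ] using this
  have hfc : Continuous fun t => Real.exp (Θ t) := Real.continuous_exp.comp hΘc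
  have hgc : Continuous fun t => Real.exp (-Θ t) := Real.continuous_exp.comp hΘc.neg
  set F : ℝ → ℝ := fun τ => ∫ t in (0:ℝ)..τ, Real.exp (Θ t) with hF
  set G : ℝ → ℝ := fun τ => ∫ t in (0:ℝ)..τ, Real.exp (-Θ t) with hG
  have hFc : Continuous F :=
    intervalIntegral.continuous_primitive (fun a b => hfc.intervalIntegrable a b) 0
  have hGc : Continuous G :=
    intervalIntegral.continuous_primitive (fun a b => hgc.intervalIntegrable a b) 0
  have hTeq : T = fun τ => Real.sqrt (F τ * G τ) := funext hT
  have hΔeq : Δ = fun τ => T τ - τ := funext hΔ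
  have hTc : Continuous T := by
    rw [hTeq]; exact Real.continuous_sqrt.comp (hFc.mul hGc)
  have main : ∀ τ : ℝ, 0 < τ → HasDerivAt Δ
      (1 / (2 * Real.sqrt (F τ * G τ)) * (Real.exp (Θ τ) * G τ + F τ * Real.exp (-Θ τ)) - 1) τ
      ∧ 0 ≤ 1 / (2 * Real.sqrt (F τ * G τ)) *
        (Real.exp (Θ τ) * G τ + F τ * Real.exp (-Θ τ)) - 1 := by
    intro τ hτ0
    have hFpos : 0 < F τ :=
      intervalIntegral.intervalIntegral_pos_of_pos (hfc.intervalIntegrable 0 τ)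
        (fun x => Real.exp_pos _) hτ0
    have hGpos : 0 < G τ :=
      intervalIntegral.intervalIntegral_pos_of_pos (hgc.intervalIntegrable 0 τ)
        (fun x => Real.exp_pos _) hτ0
    have hFd : HasDerivAt F (Real.exp (Θ τ)) τ := (hfc.integral_hasStrictDerivAt 0 τ).hasDerivAt
    have hGd : HasDerivAt G (Real.exp (-Θ τ)) τ := (hgc.integral_hasStrictDerivAt 0 τ).hasDerivAt
    have hmul : HasDerivAt (fun τ => F τ * G τ)
        (Real.exp (Θ τ) * G τ + F τ * Real.exp (-Θ τ)) τ := hFd.mul hGd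
    have hprod_ne : F τ * G τ ≠ 0 := ne_of_gt (mul_pos hFpos hGpos)
    have hTd : HasDerivAt T
        (1 / (2 * Real.sqrt (F τ * G τ)) * (Real.exp (Θ τ) * G τ + F τ * Real.exp (-Θ τ))) τ := by
      rw [hTeq]
      exact (Real.hasDerivAt_sqrt hprod_ne).comp τ hmul
    constructor
    · rw [hΔeq]; exact hTd.sub (hasDerivAt_id τ)
    · have hsq : 0 < Real.sqrt (F τ * G τ) := Real.sqrt_pos.mpr (mul_pos hFpos hGpos)
      rw [sub_nonneg, one_div, inv_mul_eq_div, le_div_iff₀ (by positivity), one_mul]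
      have hee : Real.exp (Θ τ) * Real.exp (-Θ τ) = 1 := by
        rw [← Real.exp_add]; simp
      have hprodeq : Real.exp (Θ τ) * G τ * (F τ * Real.exp (-Θ τ)) = F τ * G τ := by
        linear_combination F τ * G τ * hee
      have key : 2 * Real.sqrt (F τ * G τ) =
          2 * (Real.sqrt (Real.exp (Θ τ) * G τ) * Real.sqrt (F τ * Real.exp (-Θ τ))) := by
        rw [← Real.sqrt_mul (by positivity), hprodeq]
      rw [key]
      have h1 : Real.sqrt (Real.exp (Θ τ) * G τ) ^ 2 = Real.exp (Θ τ) * G τ :=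
        Real.sq_sqrt (by positivity)
      have h2 : Real.sqrt (F τ * Real.exp (-Θ τ)) ^ 2 = F τ * Real.exp (-Θ τ) :=
        Real.sq_sqrt (by positivity)
      nlinarith [sq_nonneg (Real.sqrt (Real.exp (Θ τ) * G τ) - Real.sqrt (F τ * Real.exp (-Θ τ)))]
  apply monotoneOn_of_deriv_nonneg (convex_Ici 0)
  · rw [hΔeq]; exact (hTc.sub continuous_id).continuousOn
  · rw [interior_Ici]
    intro τ hτ
    exact ((main τ hτ).1).differentiableAt.differentiableWithinAt
  · rw [interior_Ici]
    intro τ hτ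
    rw [((main τ hτ).1).deriv]
    exact (main τ hτ).2
end

section
/- Let a : ℝ → ℝ be continuous, Θ(τ) = ∫₀^τ a(s) ds, T(τ) = √((∫₀^τ e^{Θ(t)} dt)(∫₀^τ e^{−Θ(t)} dt)), Δ(τ) = T(τ) − τ, and fix τ > 0. Then Δ(τ′) = 0 for all τ′ ∈ [0, τ] if and only if a(τ′) = 0 for all τ′ ∈ [0, τ]. -/
open Real intervalIntegral

/-- FTC helper: derivative of a primitive of a continuous function. -/
lemma prim_hasDerivAt {f : ℝ → ℝ} (hf : Continuous f) (x : ℝ) :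
    HasDerivAt (fun u => ∫ t in (0:ℝ)..u, f t) (f x) x :=
  intervalIntegral.integral_hasDerivAt_right (hf.intervalIntegrable _ _)
    (hf.stronglyMeasurableAtFilter _ _) hf.continuousAt

/-- Equality case of Theorem 3: the differential aging vanishes on `[0, τ]`
iff the acceleration vanishes on `[0, τ]`. -/
theorem differential_aging_eq_zero_iff (a : ℝ → ℝ) (ha : Continuous a) (Θ T Δ : ℝ → ℝ)
    (hΘ : ∀ τ, Θ τ = ∫ u in (0:ℝ)..τ, a u)
    (hT : ∀ τ, T τ = Real.sqrt ((∫ t in (0:ℝ)..τ, Real.exp (Θ t)) *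
      (∫ t in (0:ℝ)..τ, Real.exp (-Θ t))))
    (hΔ : ∀ τ, Δ τ = T τ - τ)
    (τ : ℝ) (hτ : 0 < τ) :
    (∀ τ' ∈ Set.Icc (0:ℝ) τ, Δ τ' = 0) ↔ (∀ τ' ∈ Set.Icc (0:ℝ) τ, a τ' = 0) := by
  have hΘfun : Θ = fun u => ∫ s in (0:ℝ)..u, a s := funext hΘ
  have hΘd : ∀ x, HasDerivAt Θ (a x) x := by
    intro x; rw [hΘfun]; exact prim_hasDerivAt ha x
  have hΘc : Continuous Θ := continuous_iff_continuousAt.mpr fun x => (hΘd x).continuousAt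
  set F : ℝ → ℝ := fun u => ∫ t in (0:ℝ)..u, Real.exp (Θ t) with hF
  set G : ℝ → ℝ := fun u => ∫ t in (0:ℝ)..u, Real.exp (-Θ t) with hG
  have hFd : ∀ x, HasDerivAt F (Real.exp (Θ x)) x :=
    fun x => prim_hasDerivAt (Real.continuous_exp.comp hΘc) x
  have hGd : ∀ x, HasDerivAt G (Real.exp (-Θ x)) x :=
    fun x => prim_hasDerivAt (Real.continuous_exp.comp hΘc.neg) x
  constructor
  · intro h
    -- F y * G y = y ^ 2 on [0, τ]
    have hFG : ∀ y ∈ Set.Icc (0:ℝ) τ, F y * G y = y ^ 2 := by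
      intro y hy
      have hTy : T y = y := by have := h y hy; rw [hΔ] at this; linarith
      have hFy : 0 ≤ F y := intervalIntegral.integral_nonneg hy.1
        (fun t _ => (Real.exp_pos _).le)
      have hGy : 0 ≤ G y := intervalIntegral.integral_nonneg hy.1
        (fun t _ => (Real.exp_pos _).le)
      have : Real.sqrt (F y * G y) = y := by rw [← hT y]; exact hTy
      have := congrArg (fun z => z ^ 2) this
      simpa [Real.sq_sqrt (mul_nonneg hFy hGy)] using this
    -- a vanishes on the open interval
    have key : ∀ x ∈ Set.Ioo (0:ℝ) τ, a x = 0 := by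
      intro x hx
      have hmem : Set.Ioo (0:ℝ) τ ∈ nhds x := isOpen_Ioo.mem_nhds hx
      -- first derivative identity: p + q = 2x
      have hev : (fun y => F y * G y) =ᶠ[nhds x] (fun y => y ^ 2) :=
        Filter.eventuallyEq_of_mem hmem
          (fun y hy => hFG y (Set.Ioo_subset_Icc_self hy))
      have h1 : HasDerivAt (fun y => F y * G y)
          (Real.exp (Θ x) * G x + F x * Real.exp (-Θ x)) x := (hFd x).mul (hGd x)
      have h2 : HasDerivAt (fun y => F y * G y) (2 * x) x := by
        have : HasDerivAt (fun y : ℝ => y ^ 2) (2 * x) x := by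
          simpa using (hasDerivAt_pow 2 x)
        exact this.congr_of_eventuallyEq hev
      have hsum : Real.exp (Θ x) * G x + F x * Real.exp (-Θ x) = 2 * x := h1.unique h2
      have hprod : (Real.exp (Θ x) * G x) * (F x * Real.exp (-Θ x)) = x ^ 2 := by
        have hexp : Real.exp (Θ x) * Real.exp (-Θ x) = 1 := by
          rw [← Real.exp_add]; simp
        have := hFG x (Set.Ioo_subset_Icc_self hx)
        nlinarith [hexp, this]
      set p := Real.exp (Θ x) * G x
      set q := F x * Real.exp (-Θ x) with hqdef
      have hpq : (p - q) ^ 2 = 0 := by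
        have hr : (p - q) ^ 2 = (p + q) ^ 2 - 4 * (p * q) := by ring
        rw [hr, hsum, hprod]; ring
      have hpeq : p = q := by
        have := pow_eq_zero_iff (n := 2) (by norm_num) |>.mp hpq
        linarith [sub_eq_zero.mp this]
      have hq : q = x := by nlinarith
      -- now F y * exp (-Θ y) = y on Ioo 0 τ
      have hKall : ∀ y ∈ Set.Ioo (0:ℝ) τ, F y * Real.exp (-Θ y) = y := by
        intro y hy
        have hmem' : Set.Ioo (0:ℝ) τ ∈ nhds y := isOpen_Ioo.mem_nhds hy
        have hev' : (fun z => F z * G z) =ᶠ[nhds y] (fun z => z ^ 2) :=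
          Filter.eventuallyEq_of_mem hmem'
            (fun z hz => hFG z (Set.Ioo_subset_Icc_self hz))
        have h1' : HasDerivAt (fun z => F z * G z)
            (Real.exp (Θ y) * G y + F y * Real.exp (-Θ y)) y := (hFd y).mul (hGd y)
        have h2' : HasDerivAt (fun z => F z * G z) (2 * y) y := by
          have : HasDerivAt (fun z : ℝ => z ^ 2) (2 * y) y := by
            simpa using (hasDerivAt_pow 2 y)
          exact this.congr_of_eventuallyEq hev'
        have hsum' : Real.exp (Θ y) * G y + F y * Real.exp (-Θ y) = 2 * y := h1'.unique h2'
        have hprod' : (Real.exp (Θ y) * G y) * (F y * Real.exp (-Θ y)) = y ^ 2 := by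
          have hexp : Real.exp (Θ y) * Real.exp (-Θ y) = 1 := by
            rw [← Real.exp_add]; simp
          have := hFG y (Set.Ioo_subset_Icc_self hy)
          nlinarith [hexp, this]
        set p' := Real.exp (Θ y) * G y
        set q' := F y * Real.exp (-Θ y)
        have hpq' : (p' - q') ^ 2 = 0 := by
          have hr : (p' - q') ^ 2 = (p' + q') ^ 2 - 4 * (p' * q') := by ring
          rw [hr, hsum', hprod']; ring
        have : p' = q' := by
          have := pow_eq_zero_iff (n := 2) (by norm_num) |>.mp hpq'
          linarith [sub_eq_zero.mp this]
        linarith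
      -- differentiate K = F * exp(-Θ)
      have hK1 : HasDerivAt (fun y => F y * Real.exp (-Θ y))
          (Real.exp (Θ x) * Real.exp (-Θ x) + F x * (Real.exp (-Θ x) * (-a x))) x :=
        (hFd x).mul ((hΘd x).neg.exp)
      have hK2 : HasDerivAt (fun y => F y * Real.exp (-Θ y)) 1 x := by
        have hev'' : (fun y => F y * Real.exp (-Θ y)) =ᶠ[nhds x] (fun y => y) :=
          Filter.eventuallyEq_of_mem hmem (fun y hy => hKall y hy)
        exact (hasDerivAt_id x).congr_of_eventuallyEq hev''
      have heq : Real.exp (Θ x) * Real.exp (-Θ x) + F x * (Real.exp (-Θ x) * (-a x)) = 1 :=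
        hK1.unique hK2
      have hexp : Real.exp (Θ x) * Real.exp (-Θ x) = 1 := by
        rw [← Real.exp_add]; simp
      have hKx : F x * Real.exp (-Θ x) = x := hKall x hx
      have h0 : F x * (Real.exp (-Θ x) * (-a x)) = 0 := by linarith
      have : a x * x = 0 := by
        have h1 : a x * (F x * Real.exp (-Θ x)) = -(F x * (Real.exp (-Θ x) * (-a x))) := by
          ring
        rw [hKx] at h1
        rw [h1, h0]; ring
      rcases mul_eq_zero.mp this with h' | h'
      · exact h'
      · exact absurd h' (ne_of_gt hx.1)
    -- extend to closure
    have hclos : Set.EqOn a 0 (closure (Set.Ioo (0:ℝ) τ)) :=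
      (Set.EqOn.closure (fun x hx => key x hx) ha continuous_const)
    intro x hx
    have : x ∈ closure (Set.Ioo (0:ℝ) τ) := by
      rw [closure_Ioo (ne_of_lt hτ)]; exact hx
    simpa using hclos this
  · intro h x hx
    have hΘ0 : ∀ t ∈ Set.Icc (0:ℝ) x, Θ t = 0 := by
      intro t ht
      rw [hΘ t]
      have : Set.EqOn a 0 (Set.uIcc 0 t) := by
        intro u hu
        rw [Set.uIcc_of_le ht.1] at hu
        exact h u ⟨hu.1, hu.2.trans (ht.2.trans hx.2)⟩
      rw [intervalIntegral.integral_congr this]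
      simp
    have hFx : F x = x := by
      show (∫ t in (0:ℝ)..x, Real.exp (Θ t)) = x
      have : Set.EqOn (fun t => Real.exp (Θ t)) (fun _ => (1:ℝ)) (Set.uIcc 0 x) := by
        intro t ht
        rw [Set.uIcc_of_le hx.1] at ht
        simp [hΘ0 t ht]
      rw [intervalIntegral.integral_congr this]
      simp
    have hGx : G x = x := by
      show (∫ t in (0:ℝ)..x, Real.exp (-Θ t)) = x
      have : Set.EqOn (fun t => Real.exp (-Θ t)) (fun _ => (1:ℝ)) (Set.uIcc 0 x) := by
        intro t ht
        rw [Set.uIcc_of_le hx.1] at ht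
        simp [hΘ0 t ht]
      rw [intervalIntegral.integral_congr this]
      simp
    rw [hΔ, hT]
    have : Real.sqrt (F x * G x) = x := by
      rw [hFx, hGx]; exact Real.sqrt_mul_self hx.1
    rw [hF, hG] at this
    rw [this]; ring
end

section
/- Let a : ℝ → ℝ be continuous, Θ(τ) = ∫₀^τ a(s) ds, T(τ) = √((∫₀^τ e^{Θ(t)} dt)(∫₀^τ e^{−Θ(t)} dt)), and Δ(τ) = T(τ) − τ. If τ > 0 and a is not identically zero on [0, τ], then Δ(τ) > 0. -/
open Real intervalIntegral

/-- If the acceleration is not identically zero on `[0, τ]`, the differential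
aging `Δ(τ) = T(τ) - τ` is strictly positive. -/
theorem differential_aging_pos (a : ℝ → ℝ) (ha : Continuous a) (Θ T Δ : ℝ → ℝ)
    (hΘ : ∀ τ, Θ τ = ∫ u in (0:ℝ)..τ, a u)
    (hT : ∀ τ, T τ = Real.sqrt ((∫ t in (0:ℝ)..τ, Real.exp (Θ t)) *
      (∫ t in (0:ℝ)..τ, Real.exp (-Θ t))))
    (hΔ : ∀ τ, Δ τ = T τ - τ)
    (τ : ℝ) (hτ : 0 < τ)
    (hne : ¬ ∀ t ∈ Set.Icc (0:ℝ) τ, a t = 0) :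
    0 < Δ τ := by
  have hΘfun : Θ = fun u => ∫ x in (0:ℝ)..u, a x := funext hΘ
  -- derivative of Θ
  have hderiv : ∀ t, HasDerivAt Θ (a t) t := by
    intro t
    rw [hΘfun]
    exact intervalIntegral.integral_hasDerivAt_right (ha.intervalIntegrable 0 t)
      (ha.aestronglyMeasurable.stronglyMeasurableAtFilter) ha.continuousAt
  have hΘcont : Continuous Θ :=
    continuous_iff_continuousAt.2 fun t => (hderiv t).continuousAt
  set c : ℝ := (∫ t in (0:ℝ)..τ, Θ t) / τ with hc
  -- there is a point where Θ ≠ c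
  obtain ⟨t₀, ht₀mem, ht₀⟩ : ∃ t₀ ∈ Set.Icc (0:ℝ) τ, Θ t₀ ≠ c := by
    by_contra h
    push_neg at h
    apply hne
    have hIoo : ∀ t ∈ Set.Ioo (0:ℝ) τ, a t = 0 := by
      intro t ht
      have hev : Θ =ᶠ[nhds t] fun _ => c := by
        filter_upwards [Ioo_mem_nhds ht.1 ht.2] with u hu
        exact h u ⟨hu.1.le, hu.2.le⟩
      have h0 : HasDerivAt Θ 0 t := (hasDerivAt_const t c).congr_of_eventuallyEq hev
      exact (hderiv t).unique h0
    intro t ht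
    have hsub : Set.Icc (0:ℝ) τ ⊆ {u | a u = 0} := by
      have hclosed : IsClosed {u | a u = 0} := isClosed_eq ha continuous_const
      rw [← closure_Ioo hτ.ne]
      exact hclosed.closure_subset_iff.2 fun u hu => hIoo u hu
    exact hsub ht
  -- basic integrals
  have hg : Continuous fun t => Θ t - c := hΘcont.sub continuous_const
  have hintg : ∫ t in (0:ℝ)..τ, (Θ t - c) = 0 := by
    rw [intervalIntegral.integral_sub (hΘcont.intervalIntegrable 0 τ)
      (continuous_const.intervalIntegrable 0 τ), intervalIntegral.integral_const]
    simp only [smul_eq_mul, sub_zero, hc]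
    field_simp
    ring
  -- E > 0
  have hE : 0 < ∫ t in (0:ℝ)..τ, (Real.exp (Θ t - c) - 1 - (Θ t - c)) := by
    apply intervalIntegral.integral_pos hτ
    · exact ((Real.continuous_exp.comp hg).sub continuous_const).sub hg |>.continuousOn
    · intro x _
      have := Real.add_one_le_exp (Θ x - c)
      linarith
    · refine ⟨t₀, ht₀mem, ?_⟩
      have := Real.add_one_lt_exp (x := Θ t₀ - c) (by intro h; exact ht₀ (by linarith))
      linarith
  have hF : 0 ≤ ∫ t in (0:ℝ)..τ, (Real.exp (-(Θ t - c)) - 1 + (Θ t - c)) := by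
    apply intervalIntegral.integral_nonneg hτ.le
    intro u _
    have := Real.add_one_le_exp (-(Θ u - c))
    linarith
  set E := ∫ t in (0:ℝ)..τ, (Real.exp (Θ t - c) - 1 - (Θ t - c)) with hEdef
  set F := ∫ t in (0:ℝ)..τ, (Real.exp (-(Θ t - c)) - 1 + (Θ t - c)) with hFdef
  -- rewrite I and J
  have hexpg : Continuous fun t => Real.exp (Θ t - c) := Real.continuous_exp.comp hg
  have hexpng : Continuous fun t => Real.exp (-(Θ t - c)) := Real.continuous_exp.comp hg.neg
  have hI : (∫ t in (0:ℝ)..τ, Real.exp (Θ t)) = Real.exp c * (τ + E) := by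
    have h1 : ∀ t, Real.exp (Θ t) =
        Real.exp c * ((Real.exp (Θ t - c) - 1 - (Θ t - c)) + (1 + (Θ t - c))) := by
      intro t
      have h2 : Real.exp (Θ t - c) - 1 - (Θ t - c) + (1 + (Θ t - c))
          = Real.exp (Θ t - c) := by ring
      rw [h2, ← Real.exp_add]
      ring_nf
    simp only [h1]
    rw [intervalIntegral.integral_const_mul, intervalIntegral.integral_add
        (f := fun t => Real.exp (Θ t - c) - 1 - (Θ t - c)) (g := fun t => 1 + (Θ t - c))
        (((hexpg.sub continuous_const).sub hg).intervalIntegrable 0 τ)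
        ((continuous_const.add hg).intervalIntegrable 0 τ),
      intervalIntegral.integral_add (f := fun _ => (1:ℝ)) (g := fun t => Θ t - c)
        (continuous_const.intervalIntegrable 0 τ)
        (hg.intervalIntegrable 0 τ), hintg, intervalIntegral.integral_const]
    simp only [← hEdef, smul_eq_mul, mul_one, sub_zero, add_zero]
    ring
  have hJ : (∫ t in (0:ℝ)..τ, Real.exp (-Θ t)) = Real.exp (-c) * (τ + F) := by
    have h1 : ∀ t, Real.exp (-Θ t) =
        Real.exp (-c) * ((Real.exp (-(Θ t - c)) - 1 + (Θ t - c)) + (1 - (Θ t - c))) := by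
      intro t
      have h2 : Real.exp (-(Θ t - c)) - 1 + (Θ t - c) + (1 - (Θ t - c))
          = Real.exp (-(Θ t - c)) := by ring
      have h3 : -Θ t = -c + -(Θ t - c) := by ring
      rw [h2, ← Real.exp_add, ← h3]
    simp only [h1]
    rw [intervalIntegral.integral_const_mul, intervalIntegral.integral_add
        (f := fun t => Real.exp (-(Θ t - c)) - 1 + (Θ t - c)) (g := fun t => 1 - (Θ t - c))
        (((hexpng.sub continuous_const).add hg).intervalIntegrable 0 τ)
        ((continuous_const.sub hg).intervalIntegrable 0 τ),
      intervalIntegral.integral_sub (f := fun _ => (1:ℝ)) (g := fun t => Θ t - c)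
        (continuous_const.intervalIntegrable 0 τ)
        (hg.intervalIntegrable 0 τ), hintg, intervalIntegral.integral_const]
    simp only [← hFdef, smul_eq_mul, mul_one, sub_zero]
    ring
  -- conclude
  have hprod : τ ^ 2 < (∫ t in (0:ℝ)..τ, Real.exp (Θ t)) * (∫ t in (0:ℝ)..τ, Real.exp (-Θ t)) := by
    rw [hI, hJ]
    have : Real.exp c * (τ + E) * (Real.exp (-c) * (τ + F))
        = (Real.exp c * Real.exp (-c)) * ((τ + E) * (τ + F)) := by ring
    rw [this, ← Real.exp_add]
    simp only [add_neg_cancel, Real.exp_zero, one_mul]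
    nlinarith
  rw [hΔ, hT, sub_pos]
  exact Real.lt_sqrt_of_sq_lt hprod
end
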